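/- Let (Y,ρ) be a metric space, u : [0,1] → Y a map, and g ∈ L¹(0,1) a nonnegative function such that ρ(u_t,u_s)² ≤ (s−t) ∫_t^s g(r) dr for all 0 ≤ t < s ≤ 1. Then u is a 2-absolutely continuous curve and its metric speed satisfies |u̇_t|² ≤ g(t) for a.e. t ∈ [0,1]. -/

import Mathlib

/-!
By AM–GM, `d(u_t, u_s) ≤ ((s - t) + ∫_t^s g) / 2 = ∫_t^s (1 + g) / 2`, so `u` is absolutely
continuous with an `L¹` modulus. For such a curve the distance functions `d(u ·, u_q)`, `q ∈ ℚ`, are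
real absolutely continuous, and `m = sup_q |(d(u ·, u_q))'|` (Ambrosio–Gigli–Savaré) satisfies
`d(u_t, u_s) ≤ ∫_t^s m` by density of `ℚ`, and is the limit of `d(u_s, u_t) / |s - t|` at every
Lebesgue point of `m`. At a Lebesgue point of `g`, the hypothesis divided by `(s - t)²` bounds the
squared difference quotient by the average of `g`, so `m² ≤ g` a.e. and `m ≤ √g ∈ L²`.
-/

open Filter MeasureTheory Set Topology
open scoped ENNReal NNReal Classical

/-- The metric speed of a curve `u` at time `t`: the limit of `d(u s, u t)/|s - t|` as `s → t`,
if it exists (and `0` otherwise). -/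
noncomputable def metricSpeed {Y : Type*} [MetricSpace Y] (u : ℝ → Y) (t : ℝ) : ℝ :=
  if h : ∃ L : ℝ, Tendsto (fun s => dist (u s) (u t) / |s - t|) (𝓝[≠] t) (𝓝 L) then h.choose
  else 0

/-- `u : [0,1] → Y` is 2-absolutely continuous: there is `f ∈ L²(0,1)` with
`d(u_t, u_s) ≤ ∫_t^s f` for all `0 ≤ t ≤ s ≤ 1`. -/
def IsAC2 {Y : Type*} [MetricSpace Y] (u : ℝ → Y) : Prop :=
  ∃ f : ℝ → ℝ, (∀ t, 0 ≤ f t) ∧ IntegrableOn f (Set.Icc 0 1) ∧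
    IntegrableOn (fun t => f t ^ 2) (Set.Icc 0 1) ∧
    ∀ t s : ℝ, 0 ≤ t → t ≤ s → s ≤ 1 → dist (u t) (u s) ≤ ∫ r in t..s, f r

theorem le_add_div_two_of_sq_le_mul {d x y : ℝ} (hx : 0 ≤ x) (hy : 0 ≤ y) (h : d ^ 2 ≤ x * y) :
    d ≤ (x + y) / 2 := by
  nlinarith [sq_nonneg (x - y)]

theorem AbsolutelyContinuousOnInterval.of_dist_le {X X' : Type*} [PseudoMetricSpace X]
    [PseudoMetricSpace X'] {f : ℝ → X} {g : ℝ → X'} {a b : ℝ}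
    (hg : AbsolutelyContinuousOnInterval g a b)
    (h : ∀ x ∈ uIcc a b, ∀ y ∈ uIcc a b, dist (f x) (f y) ≤ dist (g x) (g y)) :
    AbsolutelyContinuousOnInterval f a b := by
  refine squeeze_zero' (Eventually.of_forall fun _ => Finset.sum_nonneg fun _ _ => dist_nonneg)
    ?_ hg
  filter_upwards [mem_inf_of_right (mem_principal_self _)] with E hE
  exact Finset.sum_le_sum fun i hi => h _ (hE.1 i hi).1 _ (hE.1 i hi).2

theorem HasDerivAt.abs_le_of_abs_sub_le {φ F : ℝ → ℝ} {φ' F' t : ℝ} (hφ : HasDerivAt φ φ' t)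
    (hF : HasDerivAt F F' t) (h : ∀ᶠ s in 𝓝 t, |φ s - φ t| ≤ |F s - F t|) : |φ'| ≤ |F'| := by
  refine le_of_tendsto_of_tendsto (hasDerivAt_iff_tendsto_slope.1 hφ).abs
    (hasDerivAt_iff_tendsto_slope.1 hF).abs ?_
  filter_upwards [nhdsWithin_le_nhds h] with s hs
  rw [slope_def_field, slope_def_field, abs_div, abs_div]
  gcongr

theorem sq_le_of_tendsto_dist_div {Y : Type*} [PseudoMetricSpace Y] {u : ℝ → Y} {G : ℝ → ℝ}
    {t L g' : ℝ} (hL : Tendsto (fun s => dist (u s) (u t) / |s - t|) (𝓝[≠] t) (𝓝 L))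
    (hG : HasDerivAt G g' t) (h : ∀ᶠ s in 𝓝 t, dist (u s) (u t) ^ 2 ≤ (s - t) * (G s - G t)) :
    L ^ 2 ≤ g' := by
  refine le_of_tendsto_of_tendsto (hL.pow 2) (hasDerivAt_iff_tendsto_slope.1 hG) ?_
  filter_upwards [nhdsWithin_le_nhds h, self_mem_nhdsWithin] with s hs hne
  have hst : s - t ≠ 0 := sub_ne_zero.2 hne
  calc (dist (u s) (u t) / |s - t|) ^ 2 = dist (u s) (u t) ^ 2 / (s - t) ^ 2 := by
        rw [div_pow, sq_abs]
    _ ≤ (s - t) * (G s - G t) / (s - t) ^ 2 := by gcongr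
    _ = slope G t s := by rw [slope_def_field]; field_simp

section MetricDerivative

variable {Y : Type*} [PseudoMetricSpace Y] {u : ℝ → Y} {f : ℝ → ℝ} {a b : ℝ}

theorem integral_sub_integral_of_mem_Icc (hf : IntervalIntegrable f volume a b) {s t : ℝ}
    (hs : s ∈ Icc a b) (ht : t ∈ Icc a b) :
    (∫ r in a..s, f r) - ∫ r in a..t, f r = ∫ r in t..s, f r :=
  intervalIntegral.integral_interval_sub_left
    (hf.mono_set (uIcc_subset_uIcc left_mem_uIcc (Icc_subset_uIcc hs)))
    (hf.mono_set (uIcc_subset_uIcc left_mem_uIcc (Icc_subset_uIcc ht)))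

theorem dist_le_abs_sub_primitive (hf : IntervalIntegrable f volume a b)
    (hu : ∀ t s, a ≤ t → t ≤ s → s ≤ b → dist (u t) (u s) ≤ ∫ r in t..s, f r) {s t : ℝ}
    (hs : s ∈ Icc a b) (ht : t ∈ Icc a b) :
    dist (u s) (u t) ≤ |(∫ r in a..s, f r) - ∫ r in a..t, f r| := by
  rw [integral_sub_integral_of_mem_Icc hf hs ht]
  rcases le_total t s with hts | hst
  · exact dist_comm (u s) (u t) ▸ (hu t s ht.1 hts hs.2).trans (le_abs_self _)
  · rw [intervalIntegral.integral_symm, abs_neg]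
    exact (hu s t hs.1 hst ht.2).trans (le_abs_self _)

theorem absolutelyContinuousOnInterval_dist (hab : a ≤ b) (hf : IntervalIntegrable f volume a b)
    (hu : ∀ t s, a ≤ t → t ≤ s → s ≤ b → dist (u t) (u s) ≤ ∫ r in t..s, f r) (y : Y) :
    AbsolutelyContinuousOnInterval (fun t => dist (u t) y) a b := by
  refine (hf.absolutelyContinuousOnInterval_intervalIntegral left_mem_uIcc).of_dist_le ?_
  rw [uIcc_of_le hab]
  intro s hs t ht
  rw [Real.dist_eq, Real.dist_eq]
  exact (abs_dist_sub_le _ _ _).trans (dist_le_abs_sub_primitive hf hu hs ht)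

noncomputable def supAbsDerivDist (u : ℝ → Y) (t : ℝ) : ℝ :=
  ⨆ q : ℚ, |deriv (fun s => dist (u s) (u q)) t|

theorem supAbsDerivDist_nonneg (u : ℝ → Y) (t : ℝ) : 0 ≤ supAbsDerivDist u t :=
  Real.iSup_nonneg fun _ => abs_nonneg _

theorem measurable_supAbsDerivDist (u : ℝ → Y) : Measurable (supAbsDerivDist u) :=
  Measurable.iSup fun _ => (measurable_deriv _).abs

theorem ae_abs_deriv_dist_le_supAbsDerivDist (hab : a ≤ b)
    (hf : IntervalIntegrable f volume a b)
    (hu : ∀ t s, a ≤ t → t ≤ s → s ≤ b → dist (u t) (u s) ≤ ∫ r in t..s, f r) :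
    ∀ᵐ t ∂volume.restrict (Ioo a b), ∀ q : ℚ,
      DifferentiableAt ℝ (fun s => dist (u s) (u q)) t ∧
      |deriv (fun s => dist (u s) (u q)) t| ≤ supAbsDerivDist u t ∧
      supAbsDerivDist u t ≤ |f t| := by
  rw [ae_restrict_iff' measurableSet_Ioo]
  filter_upwards [ae_all_iff.2 fun q : ℚ =>
      (absolutelyContinuousOnInterval_dist hab hf hu (u q)).ae_differentiableAt,
    hf.ae_hasDerivAt_integral] with t hdiff hF ht
  have htI : t ∈ uIcc a b := Ioo_subset_Icc_self.trans Icc_subset_uIcc ht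
  have hle_f : ∀ q : ℚ, |deriv (fun s => dist (u s) (u q)) t| ≤ |f t| := by
    intro q
    refine (hdiff q htI).hasDerivAt.abs_le_of_abs_sub_le (hF htI a left_mem_uIcc) ?_
    filter_upwards [Icc_mem_nhds ht.1 ht.2] with s hs
    exact (abs_dist_sub_le _ _ _).trans
      (dist_le_abs_sub_primitive hf hu hs (Ioo_subset_Icc_self ht))
  exact fun q => ⟨hdiff q htI, le_ciSup ⟨|f t|, forall_mem_range.2 hle_f⟩ q, ciSup_le hle_f⟩

theorem intervalIntegrable_supAbsDerivDist (hab : a ≤ b) (hf : IntervalIntegrable f volume a b)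
    (hu : ∀ t s, a ≤ t → t ≤ s → s ≤ b → dist (u t) (u s) ≤ ∫ r in t..s, f r) :
    IntervalIntegrable (supAbsDerivDist u) volume a b := by
  have hf' := (intervalIntegrable_iff_integrableOn_Ioo_of_le hab).1 hf
  rw [intervalIntegrable_iff_integrableOn_Ioo_of_le hab]
  refine hf'.norm.mono' (measurable_supAbsDerivDist u).aestronglyMeasurable ?_
  filter_upwards [ae_abs_deriv_dist_le_supAbsDerivDist hab hf hu] with t ht
  rw [Real.norm_eq_abs, abs_of_nonneg (supAbsDerivDist_nonneg u t)]
  exact (ht 0).2.2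

theorem dist_sub_dist_le_integral_supAbsDerivDist (hab : a ≤ b)
    (hf : IntervalIntegrable f volume a b)
    (hu : ∀ t s, a ≤ t → t ≤ s → s ≤ b → dist (u t) (u s) ≤ ∫ r in t..s, f r) (y : ℚ)
    {t s : ℝ} (ht : a ≤ t) (hts : t ≤ s) (hs : s ≤ b) :
    dist (u s) (u y) - dist (u t) (u y) ≤ ∫ r in t..s, supAbsDerivDist u r := by
  have hsub : uIcc t s ⊆ uIcc a b := by
    rw [uIcc_of_le hts, uIcc_of_le hab]; exact Icc_subset_Icc ht hs
  have hφ := (absolutelyContinuousOnInterval_dist hab hf hu (u y)).mono hsub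
  rw [← hφ.integral_deriv_eq_sub]
  refine intervalIntegral.integral_mono_ae_restrict hts hφ.intervalIntegrable_deriv
    ((intervalIntegrable_supAbsDerivDist hab hf hu).mono_set hsub) ?_
  have hae := ae_abs_deriv_dist_le_supAbsDerivDist hab hf hu
  rw [restrict_Ioo_eq_restrict_Icc] at hae
  filter_upwards [ae_restrict_of_ae_restrict_of_subset (Icc_subset_Icc ht hs) hae] with r hr
  exact (le_abs_self _).trans (hr y).2.1

theorem dist_le_integral_supAbsDerivDist (hab : a ≤ b) (hf : IntervalIntegrable f volume a b)
    (hu : ∀ t s, a ≤ t → t ≤ s → s ≤ b → dist (u t) (u s) ≤ ∫ r in t..s, f r)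
    (t s : ℝ) (ht : a ≤ t) (hts : t ≤ s) (hs : s ≤ b) :
    dist (u t) (u s) ≤ ∫ r in t..s, supAbsDerivDist u r := by
  rcases hts.eq_or_lt with rfl | hts
  · simp
  set F : ℝ → ℝ := fun x => ∫ r in a..x, f r
  have hFc : ContinuousWithinAt F (Icc a b) t :=
    (intervalIntegral.continuousOn_primitive_interval' hf left_mem_uIcc).mono Icc_subset_uIcc t
      ⟨ht, hts.le.trans hs⟩
  refine le_of_forall_pos_le_add fun ε hε => ?_
  obtain ⟨δ, hδ, hF⟩ := Metric.continuousWithinAt_iff.1 hFc (ε / 2) (half_pos hε)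
  obtain ⟨q, htq, hq⟩ := exists_rat_btwn (lt_min hts (lt_add_of_pos_right t hδ))
  have hqI : (q : ℝ) ∈ Icc a b := ⟨ht.trans htq.le, (hq.trans_le (min_le_left _ _)).le.trans hs⟩
  have hclose : dist (u t) (u q) < ε / 2 := by
    refine (dist_le_abs_sub_primitive hf hu ⟨ht, hts.le.trans hs⟩ hqI).trans_lt ?_
    rw [abs_sub_comm, ← Real.dist_eq]
    refine hF hqI ?_
    rw [Real.dist_eq, abs_of_pos (sub_pos.2 htq)]
    linarith [min_le_right s (t + δ)]
  linarith [dist_triangle_right (u t) (u s) (u q),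
    dist_sub_dist_le_integral_supAbsDerivDist hab hf hu q ht hts.le hs]

theorem tendsto_dist_div_supAbsDerivDist {M : ℝ → ℝ} {t : ℝ}
    (hdiff : ∀ q : ℚ, DifferentiableAt ℝ (fun s => dist (u s) (u q)) t)
    (hM : HasDerivAt M (supAbsDerivDist u t) t)
    (hle : ∀ᶠ s in 𝓝 t, dist (u s) (u t) ≤ |M s - M t|) :
    Tendsto (fun s => dist (u s) (u t) / |s - t|) (𝓝[≠] t) (𝓝 (supAbsDerivDist u t)) := by
  refine tendsto_order.2 ⟨fun L hL => ?_, fun L hL => ?_⟩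
  · obtain ⟨q, hq⟩ := exists_lt_of_lt_ciSup hL
    filter_upwards [(hasDerivAt_iff_tendsto_slope.1 (hdiff q).hasDerivAt).abs.eventually
      (lt_mem_nhds hq)] with s hs
    refine hs.trans_le ?_
    rw [slope_def_field, abs_div]
    gcongr
    exact abs_dist_sub_le _ _ _
  · have hM' := (hasDerivAt_iff_tendsto_slope.1 hM).abs
    rw [abs_of_nonneg (supAbsDerivDist_nonneg u t)] at hM'
    filter_upwards [hM'.eventually (gt_mem_nhds hL), nhdsWithin_le_nhds hle] with s hs hs'
    refine lt_of_le_of_lt ?_ hs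
    rw [slope_def_field, abs_div]
    gcongr

theorem ae_tendsto_dist_div_supAbsDerivDist (hab : a ≤ b) (hf : IntervalIntegrable f volume a b)
    (hu : ∀ t s, a ≤ t → t ≤ s → s ≤ b → dist (u t) (u s) ≤ ∫ r in t..s, f r) :
    ∀ᵐ t ∂volume.restrict (Ioo a b),
      Tendsto (fun s => dist (u s) (u t) / |s - t|) (𝓝[≠] t) (𝓝 (supAbsDerivDist u t)) := by
  have hm := intervalIntegrable_supAbsDerivDist hab hf hu
  filter_upwards [ae_abs_deriv_dist_le_supAbsDerivDist hab hf hu,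
    ae_restrict_of_ae hm.ae_hasDerivAt_integral,
    self_mem_ae_restrict measurableSet_Ioo] with t hdiff hM ht
  refine tendsto_dist_div_supAbsDerivDist (fun q => (hdiff q).1)
    (hM (Ioo_subset_Icc_self.trans Icc_subset_uIcc ht) a left_mem_uIcc) ?_
  filter_upwards [Icc_mem_nhds ht.1 ht.2] with s hs
  exact dist_le_abs_sub_primitive hm (dist_le_integral_supAbsDerivDist hab hf hu) hs
    (Ioo_subset_Icc_self ht)

end MetricDerivative

section SquareBound

variable {Y : Type*} [PseudoMetricSpace Y] {u : ℝ → Y} {g : ℝ → ℝ} {a b : ℝ}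

theorem dist_le_integral_of_dist_sq_le (hg0 : ∀ t, 0 ≤ g t) (hg : IntervalIntegrable g volume a b)
    (hbound : ∀ t s, a ≤ t → t ≤ s → s ≤ b → dist (u t) (u s) ^ 2 ≤ (s - t) * ∫ r in t..s, g r)
    (t s : ℝ) (ht : a ≤ t) (hts : t ≤ s) (hs : s ≤ b) :
    dist (u t) (u s) ≤ ∫ r in t..s, (1 + g r) / 2 := by
  have hg' : IntervalIntegrable g volume t s := hg.mono_set (by
    rw [uIcc_of_le hts, uIcc_of_le (ht.trans (hts.trans hs))]; exact Icc_subset_Icc ht hs)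
  rw [intervalIntegral.integral_div, intervalIntegral.integral_add intervalIntegrable_const hg',
    intervalIntegral.integral_const, smul_eq_mul, mul_one]
  exact le_add_div_two_of_sq_le_mul (sub_nonneg.2 hts)
    (intervalIntegral.integral_nonneg hts fun r _ => hg0 r) (hbound t s ht hts hs)

theorem ae_sq_le_of_dist_sq_le (hg : IntervalIntegrable g volume a b)
    (hbound : ∀ t s, a ≤ t → t ≤ s → s ≤ b → dist (u t) (u s) ^ 2 ≤ (s - t) * ∫ r in t..s, g r) :
    ∀ᵐ t ∂volume.restrict (Ioo a b), ∀ L,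
      Tendsto (fun s => dist (u s) (u t) / |s - t|) (𝓝[≠] t) (𝓝 L) → L ^ 2 ≤ g t := by
  filter_upwards [ae_restrict_of_ae hg.ae_hasDerivAt_integral,
    self_mem_ae_restrict measurableSet_Ioo] with t hG ht L hL
  refine sq_le_of_tendsto_dist_div hL (hG (Ioo_subset_Icc_self.trans Icc_subset_uIcc ht) a
    left_mem_uIcc) ?_
  filter_upwards [Icc_mem_nhds ht.1 ht.2] with s hs
  rw [integral_sub_integral_of_mem_Icc hg hs (Ioo_subset_Icc_self ht)]
  rcases le_total t s with hts | hst
  · exact dist_comm (u s) (u t) ▸ hbound t s ht.1.le hts hs.2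
  · rw [intervalIntegral.integral_symm, mul_neg, ← neg_mul, neg_sub]
    exact hbound s t hs.1 hst ht.2.le

end SquareBound

theorem isAC2_of_dist_le_integral {Y : Type*} [MetricSpace Y] {u : ℝ → Y} {m g : ℝ → ℝ}
    (hg0 : ∀ t, 0 ≤ g t) (hg : IntegrableOn g (Icc 0 1)) (hm : IntervalIntegrable m volume 0 1)
    (hdist : ∀ t s, 0 ≤ t → t ≤ s → s ≤ 1 → dist (u t) (u s) ≤ ∫ r in t..s, m r)
    (hmg : ∀ᵐ t ∂volume.restrict (Ioo 0 1), m t ^ 2 ≤ g t) : IsAC2 u := by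
  have hsq : IntegrableOn (fun t => √(g t) ^ 2) (Icc 0 1) := by
    simpa only [Real.sq_sqrt (hg0 _)] using hg
  have hsqrt : IntegrableOn (fun t => √(g t)) (Icc 0 1) :=
    ((memLp_two_iff_integrable_sq (Real.continuous_sqrt.comp_aestronglyMeasurable
      hg.aestronglyMeasurable)).2 hsq).integrable one_le_two
  refine ⟨fun t => √(g t), fun t => Real.sqrt_nonneg _, hsqrt, hsq, fun t s ht hts hs => ?_⟩
  have hsub : uIcc t s ⊆ uIcc 0 1 := by
    rw [uIcc_of_le hts, uIcc_of_le zero_le_one]; exact Icc_subset_Icc ht hs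
  refine (hdist t s ht hts hs).trans (intervalIntegral.integral_mono_ae_restrict hts
    (hm.mono_set hsub) (((intervalIntegrable_iff_integrableOn_Icc_of_le zero_le_one).2
      hsqrt).mono_set hsub) ?_)
  rw [restrict_Ioo_eq_restrict_Icc] at hmg
  filter_upwards [ae_restrict_of_ae_restrict_of_subset (Icc_subset_Icc ht hs) hmg] with r hr
  exact (le_abs_self _).trans (Real.abs_le_sqrt hr)

theorem metricSpeed_eq_of_tendsto {Y : Type*} [MetricSpace Y] {u : ℝ → Y} {t L : ℝ}
    (h : Tendsto (fun s => dist (u s) (u t) / |s - t|) (𝓝[≠] t) (𝓝 L)) : metricSpeed u t = L := by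
  have hL : ∃ L, Tendsto (fun s => dist (u s) (u t) / |s - t|) (𝓝[≠] t) (𝓝 L) := ⟨L, h⟩
  rw [metricSpeed, dif_pos hL]
  exact tendsto_nhds_unique hL.choose_spec h

/-- If `u : [0,1] → Y` and `g ∈ L¹(0,1)` is nonnegative with
`d(u_t,u_s)² ≤ (s-t) ∫_t^s g` for all `0 ≤ t ≤ s ≤ 1`, then `u` is 2-absolutely continuous and
its metric speed exists a.e. and satisfies `|u̇_t|² ≤ g t` for a.e. `t ∈ [0,1]`. -/
theorem stmt16 {Y : Type*} [MetricSpace Y] (u : ℝ → Y) (g : ℝ → ℝ)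
    (hg0 : ∀ t, 0 ≤ g t) (hgint : IntegrableOn g (Set.Icc 0 1))
    (hbound : ∀ t s : ℝ, 0 ≤ t → t ≤ s → s ≤ 1 →
      dist (u t) (u s) ^ 2 ≤ (s - t) * ∫ r in t..s, g r) :
    IsAC2 u ∧
      ∀ᵐ t ∂(MeasureTheory.volume.restrict (Set.Ioo (0:ℝ) 1)),
        (∃ L : ℝ, Tendsto (fun s => dist (u s) (u t) / |s - t|) (𝓝[≠] t) (𝓝 L)) ∧
        metricSpeed u t ^ 2 ≤ g t := by
  have hg : IntervalIntegrable g volume 0 1 :=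
    (intervalIntegrable_iff_integrableOn_Icc_of_le zero_le_one).2 hgint
  have hf : IntervalIntegrable (fun r => (1 + g r) / 2) volume 0 1 :=
    (intervalIntegrable_const.add hg).div_const 2
  have hu := dist_le_integral_of_dist_sq_le hg0 hg hbound
  have hspeed := ae_tendsto_dist_div_supAbsDerivDist zero_le_one hf hu
  have hsq := ae_sq_le_of_dist_sq_le hg hbound
  refine ⟨isAC2_of_dist_le_integral hg0 hgint (intervalIntegrable_supAbsDerivDist zero_le_one hf hu)
    (dist_le_integral_supAbsDerivDist zero_le_one hf hu) ?_, ?_⟩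
  · filter_upwards [hspeed, hsq] with t hlim hle using hle _ hlim
  · filter_upwards [hspeed, hsq] with t hlim hle
    exact ⟨⟨_, hlim⟩, metricSpeed_eq_of_tendsto hlim ▸ hle _ hlim⟩
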